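/- arXiv:1610.08651 — 4 statements merged into one kernel-verified Lean document; each statement's English description precedes it below -/
import Mathlib

section
/- Let r ≥ 1, v ∈ ℤ^r, and l an index with v_l > 0. For each j define m_j := min{m ∈ ℕ : m·v_l + v_j ≥ 0}. Then each element e_j + m_j·e_l (where e_i denotes the i-th standard basis vector of ℕ^r) lies in S = {k ∈ ℕ^r : ⟨k,v⟩ ≥ 0} and is irreducible in S, i.e. it is nonzero and whenever e_j + m_j·e_l = a + b with a, b ∈ S, then a = 0 or b = 0. -/
lemma aux_single {r : ℕ} (v : Fin r → ℤ) (j : Fin r) (c : ℕ) :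
    ∑ i, ((Pi.single j c : Fin r → ℕ) i : ℤ) * v i = (c : ℤ) * v j := by
  rw [Finset.sum_eq_single j]
  · simp
  · intro i _ hi; simp [Pi.single_apply, hi]
  · simp

theorem stmt2 (r : ℕ) (hr : 1 ≤ r) (v : Fin r → ℤ) (l : Fin r) (hl : 0 < v l)
    (m : Fin r → ℕ) (hm : ∀ j, m j = sInf {n : ℕ | 0 ≤ (n : ℤ) * v l + v j}) :
    ∀ j : Fin r,
      (0 ≤ ∑ i, ((Pi.single j 1 + m j • Pi.single l 1 : Fin r → ℕ) i : ℤ) * v i) ∧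
      (Pi.single j 1 + m j • Pi.single l 1 : Fin r → ℕ) ≠ 0 ∧
      ∀ a b : Fin r → ℕ,
        0 ≤ ∑ i, (a i : ℤ) * v i → 0 ≤ ∑ i, (b i : ℤ) * v i →
        (Pi.single j 1 + m j • Pi.single l 1 : Fin r → ℕ) = a + b →
        a = 0 ∨ b = 0 := by
  intro j
  have hne : ((v j).natAbs) ∈ {n : ℕ | 0 ≤ (n : ℤ) * v l + v j} := by
    simp only [Set.mem_setOf_eq]
    have h1 : (1 : ℤ) ≤ v l := hl
    have : ((v j).natAbs : ℤ) * 1 ≤ ((v j).natAbs : ℤ) * v l :=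
      mul_le_mul_of_nonneg_left h1 (by positivity)
    have h2 : -(v j) ≤ ((v j).natAbs : ℤ) := by omega
    linarith
  have hmem : 0 ≤ (m j : ℤ) * v l + v j := by
    have := Nat.sInf_mem ⟨_, hne⟩
    rw [← hm j] at this
    exact this
  have hmin : ∀ k, k < m j → ¬ (0 ≤ (k : ℤ) * v l + v j) := by
    intro k hk
    rw [hm j] at hk
    exact Nat.notMem_of_lt_sInf hk
  have hsingle : (m j • Pi.single l 1 : Fin r → ℕ) = Pi.single l (m j) := by
    funext i; simp [Pi.single_apply, mul_ite]
  have hsum : ∀ c d : ℕ, ∑ i, (((Pi.single j c + Pi.single l d : Fin r → ℕ)) i : ℤ) * v i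
      = (c : ℤ) * v j + (d : ℤ) * v l := by
    intro c d
    have : ∀ i, (((Pi.single j c + Pi.single l d : Fin r → ℕ)) i : ℤ) * v i
        = ((Pi.single j c : Fin r → ℕ) i : ℤ) * v i + ((Pi.single l d : Fin r → ℕ) i : ℤ) * v i := by
      intro i; push_cast [Pi.add_apply]; ring
    rw [Finset.sum_congr rfl (fun i _ => this i), Finset.sum_add_distrib,
      aux_single, aux_single]
  constructor
  · rw [hsingle, hsum]
    push_cast
    linarith
  constructor
  · intro h
    have := congrFun h j
    simp [Pi.single_apply] at this
  · intro a b ha hb hab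
    rw [hsingle] at hab
    have hab' : ∀ i, a i + b i = (Pi.single j 1 : Fin r → ℕ) i + (Pi.single l (m j) : Fin r → ℕ) i := by
      intro i; exact (congrFun hab i).symm
    by_cases hjl : j = l
    · -- then m j = 0
      subst hjl
      have hm0 : m j = 0 := by
        rw [hm j]
        refine Nat.sInf_eq_zero.2 (Or.inl ?_)
        simp only [Set.mem_setOf_eq]
        push_cast; linarith
      have hzero : ∀ i, i ≠ j → a i = 0 ∧ b i = 0 := by
        intro i hi
        have := hab' i
        simp [Pi.single_apply, hi, hm0] at this
        omega
      have hj1 : a j + b j = 1 := by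
        have := hab' j
        simp [hm0] at this
        omega
      rcases Nat.add_eq_one_iff.1 hj1 with ⟨h1, _⟩ | ⟨_, h2⟩
      · left; funext i
        by_cases hi : i = j
        · subst hi; exact h1
        · exact (hzero i hi).1
      · right; funext i
        by_cases hi : i = j
        · subst hi; exact h2
        · exact (hzero i hi).2
    · have hzero : ∀ i, i ≠ j → i ≠ l → a i = 0 ∧ b i = 0 := by
        intro i hi hi'
        have := hab' i
        simp [Pi.single_apply, hi, hi'] at this
        omega
      have hj1 : a j + b j = 1 := by
        have := hab' j
        simp [Pi.single_apply, Ne.symm hjl] at this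
        omega
      have hl1 : a l + b l = m j := by
        have := hab' l
        simp [Pi.single_apply, hjl] at this
        omega
      -- key claim
      have key : ∀ c d : Fin r → ℕ, (∀ i, c i + d i = a i + b i) →
          0 ≤ ∑ i, (c i : ℤ) * v i → c j = 1 → d = 0 := by
        intro c d hcd hc hcj
        have hcdl : c l + d l = m j := by rw [hcd l]; exact hl1
        have hdj : d j = 0 := by have := hcd j; omega
        have hz : ∀ i, i ≠ j → i ≠ l → c i = 0 ∧ d i = 0 := by
          intro i hi hi'
          have := hcd i
          have := (hzero i hi hi')
          omega
        have hcrepr : c = Pi.single j (c j) + Pi.single l (c l) := by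
          funext i
          by_cases hi : i = j
          · subst hi; simp [Pi.single_apply, hjl]
          · by_cases hi' : i = l
            · subst hi'; simp [Pi.single_apply, Ne.symm hjl]
            · simp [Pi.single_apply, hi, hi', (hz i hi hi').1]
        have hdl : d l = 0 := by
          by_contra hdl
          have hcl : c l < m j := by omega
          apply hmin (c l) hcl
          rw [hcrepr, hsum, hcj] at hc
          push_cast at hc ⊢
          linarith
        funext i
        by_cases hi : i = j
        · subst hi; exact hdj
        · by_cases hi' : i = l
          · subst hi'; exact hdl
          · exact (hz i hi hi').2
      rcases Nat.add_eq_one_iff.1 hj1 with ⟨h1, h2⟩ | ⟨h1, h2⟩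
      · left; exact key b a (fun i => by rw [add_comm]; ) hb h2
      · right; exact key a b (fun i => rfl) ha h1
end

section
/- Let r ≥ 2, v ∈ ℤ^r, and suppose there exist distinct indices k, l with v_k > 0 and v_l > 0. Define m_j := min{m ∈ ℕ : m·v_l + v_j ≥ 0} and n_j := min{m ∈ ℕ : m·v_k + v_j ≥ 0}. If the two sets {e_j + m_j·e_l : 1 ≤ j ≤ r} and {e_j + n_j·e_k : 1 ≤ j ≤ r} of vectors in ℕ^r are equal, then m_j = n_j = 0 for all j; equivalently, v_j ≥ 0 for all j. -/
theorem stmt6 (r : ℕ) (hr : 2 ≤ r) (v : Fin r → ℤ) (k l : Fin r) (hkl : k ≠ l)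
    (hk : 0 < v k) (hl : 0 < v l)
    (m n : Fin r → ℕ)
    (hm : ∀ j, m j = sInf {c : ℕ | 0 ≤ (c : ℤ) * v l + v j})
    (hn : ∀ j, n j = sInf {c : ℕ | 0 ≤ (c : ℤ) * v k + v j})
    (hsets : {x : Fin r → ℕ | ∃ j, x = Pi.single j 1 + m j • Pi.single l 1}
           = {x : Fin r → ℕ | ∃ j, x = Pi.single j 1 + n j • Pi.single k 1}) :
    (∀ j, m j = 0 ∧ n j = 0) ∧ (∀ j, 0 ≤ v j) := by
  have hSne : ∀ (w : Fin r), 0 < v w → ∀ j : Fin r,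
      {c : ℕ | 0 ≤ (c : ℤ) * v w + v j}.Nonempty := by
    intro w hw j
    refine ⟨(-v j).toNat, ?_⟩
    have h1 := Int.self_le_toNat (-v j)
    have h2 : (((-v j).toNat : ℤ)) * 1 ≤ ((-v j).toNat : ℤ) * v w :=
      mul_le_mul_of_nonneg_left hw (by positivity)
    simp only [Set.mem_setOf_eq]
    linarith
  have hm0 : ∀ j, m j = 0 := by
    intro j
    by_contra hmj
    have hjl : j ≠ l := by
      rintro rfl; apply hmj
      rw [hm j]; apply Nat.sInf_eq_zero.mpr; left; simpa using hl.le
    have hjk : j ≠ k := by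
      rintro rfl; apply hmj
      rw [hm j]; apply Nat.sInf_eq_zero.mpr; left
      simp only [Set.mem_setOf_eq, Nat.cast_zero, zero_mul, zero_add]; linarith
    have hx : (Pi.single j 1 + m j • Pi.single l 1 : Fin r → ℕ) ∈
        {x : Fin r → ℕ | ∃ j, x = Pi.single j 1 + m j • Pi.single l 1} := ⟨j, rfl⟩
    rw [hsets] at hx
    obtain ⟨j', hj'⟩ := hx
    have hAtj := congrFun hj' j
    have hAtl := congrFun hj' l
    by_cases hj'j : j' = j
    · subst hj'j
      simp [Pi.single_apply, Ne.symm hjl, Ne.symm hkl, hjl] at hAtl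
      exact hmj hAtl
    · have hjj' : j ≠ j' := fun h => hj'j h.symm
      simp [Pi.single_apply, hjl, hjk, hjj'] at hAtj
  have hn0 : ∀ j, n j = 0 := by
    intro j
    by_contra hnj
    have hjl : j ≠ l := by
      rintro rfl; apply hnj
      rw [hn j]; apply Nat.sInf_eq_zero.mpr; left
      simp only [Set.mem_setOf_eq, Nat.cast_zero, zero_mul, zero_add]; linarith
    have hjk : j ≠ k := by
      rintro rfl; apply hnj
      rw [hn j]; apply Nat.sInf_eq_zero.mpr; left; simpa using hk.le
    have hx : (Pi.single j 1 + n j • Pi.single k 1 : Fin r → ℕ) ∈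
        {x : Fin r → ℕ | ∃ j, x = Pi.single j 1 + n j • Pi.single k 1} := ⟨j, rfl⟩
    rw [← hsets] at hx
    obtain ⟨j', hj'⟩ := hx
    have hAtj := congrFun hj' j
    have hAtk := congrFun hj' k
    by_cases hj'j : j' = j
    · subst hj'j
      simp [Pi.single_apply, Ne.symm hjk, hkl, hjk] at hAtk
      exact hnj hAtk
    · have hjj' : j ≠ j' := fun h => hj'j h.symm
      simp [Pi.single_apply, hjl, hjk, hjj'] at hAtj
  have hv : ∀ j, 0 ≤ v j := by
    intro j
    have h0 : (0 : ℕ) ∈ {c : ℕ | 0 ≤ (c : ℤ) * v l + v j} := by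
      have := hm0 j
      rw [hm j] at this
      rcases Nat.sInf_eq_zero.mp this with h | h
      · exact h
      · exact absurd h (hSne l hl j).ne_empty
    simpa using h0
  exact ⟨fun j => ⟨hm0 j, hn0 j⟩, hv⟩
end

section
/- Let r ≥ 1, v ∈ ℤ^r, and S = {k ∈ ℕ^r : ⟨k, v⟩ ≥ 0}. Suppose S, viewed as a commutative monoid, is free (isomorphic to ℕ^r as a monoid, equivalently every element has a unique representation as an ℕ-combination of the irreducible elements and there are exactly r irreducible elements). If moreover there exists l with v_l > 0, then defining m_j := min{m ∈ ℕ : m·v_l + v_j ≥ 0}, the set of irreducible elements of S equals {e_j + m_j·e_l : 1 ≤ j ≤ r}. -/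
/-- `s` is an irreducible element of `S = {k ∈ ℕ^r : ⟨k,v⟩ ≥ 0}`:
it lies in `S`, is nonzero, and is not the sum of two nonzero elements of `S`. -/
def IsIrredElt (r : ℕ) (v : Fin r → ℤ) (s : Fin r → ℕ) : Prop :=
  0 ≤ ∑ i, (s i : ℤ) * v i ∧ s ≠ 0 ∧
    ∀ a b : Fin r → ℕ, 0 ≤ ∑ i, (a i : ℤ) * v i → 0 ≤ ∑ i, (b i : ℤ) * v i →
      s = a + b → a = 0 ∨ b = 0

lemma sum_single_mul (r : ℕ) (v : Fin r → ℤ) (j : Fin r) (c : ℕ) :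
    ∑ i, ((Pi.single j c : Fin r → ℕ) i : ℤ) * v i = (c : ℤ) * v j := by
  rw [Finset.sum_eq_single j]
  · simp
  · intro i _ hij
    simp [Pi.single_eq_of_ne hij]
  · simp

lemma smul_single_one (r : ℕ) (l : Fin r) (c : ℕ) :
    c • (Pi.single l 1 : Fin r → ℕ) = Pi.single l c := by
  ext i
  by_cases h : i = l <;> simp [Pi.single_apply, h]

/-- the only two possibly-nonzero coordinates contribute to the pairing -/
lemma sum_two_coords (r : ℕ) (v : Fin r → ℤ) (j l : Fin r) (hjl : j ≠ l)
    (a : Fin r → ℕ) (hz : ∀ i, i ≠ j → i ≠ l → a i = 0) :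
    ∑ i, (a i : ℤ) * v i = (a j : ℤ) * v j + (a l : ℤ) * v l := by
  have h1 : ∑ i, (a i : ℤ) * v i = ∑ i ∈ ({j, l} : Finset (Fin r)), (a i : ℤ) * v i := by
    refine (Finset.sum_subset (Finset.subset_univ _) ?_).symm
    intro x _ hx
    simp only [Finset.mem_insert, Finset.mem_singleton, not_or] at hx
    rw [hz x hx.1 hx.2]
    simp
  rw [h1, Finset.sum_pair hjl]

lemma aux_zero (r : ℕ) (v : Fin r → ℤ) (l : Fin r)
    (m : Fin r → ℕ)
    (hmin : ∀ (j : Fin r) (n : ℕ), 0 ≤ (n : ℤ) * v l + v j → m j ≤ n)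
    (j : Fin r) (hjl : j ≠ l) (a b : Fin r → ℕ)
    (ha : 0 ≤ ∑ i, (a i : ℤ) * v i)
    (hcomp : ∀ i, (Pi.single j 1 + m j • Pi.single l 1 : Fin r → ℕ) i = a i + b i)
    (haj : a j = 1) (hbj : b j = 0) : b = 0 := by
  have hoth : ∀ i, i ≠ j → i ≠ l → a i = 0 ∧ b i = 0 := by
    intro i h1 h2
    have := hcomp i
    simp [Pi.single_eq_of_ne h1, Pi.single_eq_of_ne h2] at this
    omega
  have hcl : m j = a l + b l := by
    have := hcomp l
    simpa [Pi.single_eq_of_ne (Ne.symm hjl)] using this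
  have hsum : ∑ i, (a i : ℤ) * v i = (a j : ℤ) * v j + (a l : ℤ) * v l :=
    sum_two_coords r v j l hjl a (fun i h1 h2 => (hoth i h1 h2).1)
  have hge : m j ≤ a l := by
    apply hmin j (a l)
    rw [hsum, haj] at ha
    push_cast at ha ⊢
    linarith
  have hbl : b l = 0 := by omega
  funext i
  by_cases h1 : i = j
  · rw [h1, hbj]; rfl
  · by_cases h2 : i = l
    · rw [h2, hbl]; rfl
    · exact (hoth i h1 h2).2

lemma gen_irred (r : ℕ) (v : Fin r → ℤ) (l : Fin r) (hl : 0 < v l)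
    (m : Fin r → ℕ)
    (hmem : ∀ j, 0 ≤ (m j : ℤ) * v l + v j)
    (hmin : ∀ (j : Fin r) (n : ℕ), 0 ≤ (n : ℤ) * v l + v j → m j ≤ n)
    (j : Fin r) :
    IsIrredElt r v (Pi.single j 1 + m j • Pi.single l 1) := by
  refine ⟨?_, ?_, ?_⟩
  · -- lies in S
    rw [smul_single_one]
    have : ∑ i, (((Pi.single j 1 + Pi.single l (m j) : Fin r → ℕ)) i : ℤ) * v i
        = ∑ i, ((Pi.single j 1 : Fin r → ℕ) i : ℤ) * v i
          + ∑ i, ((Pi.single l (m j) : Fin r → ℕ) i : ℤ) * v i := by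
      rw [← Finset.sum_add_distrib]
      refine Finset.sum_congr rfl fun i _ => ?_
      simp only [Pi.add_apply]
      push_cast
      ring
    rw [this, sum_single_mul, sum_single_mul]
    have := hmem j
    push_cast at this ⊢
    linarith
  · -- nonzero
    intro h0
    have := congrFun h0 j
    simp at this
  · -- irreducible
    intro a b ha hb heq
    by_cases hjl : j = l
    · -- here m l = 0 and the element is single l 1
      subst hjl
      have hmj : m j = 0 := Nat.le_zero.mp (hmin j 0 (by simpa using hl.le))
      have hcomp : ∀ i, (Pi.single j 1 : Fin r → ℕ) i = a i + b i := by
        intro i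
        have := congrFun heq i
        simpa [hmj] using this
      have hoth : ∀ i, i ≠ j → a i = 0 ∧ b i = 0 := by
        intro i h1
        have := hcomp i
        simp [Pi.single_eq_of_ne h1] at this
        omega
      have hj : a j + b j = 1 := by simpa using (hcomp j).symm
      rcases Nat.add_eq_one_iff.mp hj with ⟨h1, h2⟩ | ⟨h1, h2⟩
      · left
        funext i
        by_cases h : i = j
        · rw [h, h1]; rfl
        · exact (hoth i h).1
      · right
        funext i
        by_cases h : i = j
        · rw [h, h2]; rfl
        · exact (hoth i h).2
    · have hcomp : ∀ i, (Pi.single j 1 + m j • Pi.single l 1 : Fin r → ℕ) i = a i + b i :=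
        fun i => congrFun heq i
      have hj : a j + b j = 1 := by
        have := hcomp j
        simpa [Pi.single_eq_of_ne hjl] using this.symm
      rcases Nat.add_eq_one_iff.mp hj with ⟨h1, h2⟩ | ⟨h1, h2⟩
      · left
        exact aux_zero r v l m hmin j hjl b a hb
          (fun i => by rw [hcomp i]; ring) h2 h1
      · right
        exact aux_zero r v l m hmin j hjl a b ha hcomp h1 h2

theorem stmt13 (r : ℕ) (hr : 1 ≤ r) (v : Fin r → ℤ)
    (hcard : {s : Fin r → ℕ | IsIrredElt r v s}.ncard = r)
    (hfree : ∀ s : Fin r → ℕ, 0 ≤ ∑ i, (s i : ℤ) * v i →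
      ∃! a : (Fin r → ℕ) →₀ ℕ,
        (↑a.support ⊆ {x : Fin r → ℕ | IsIrredElt r v x}) ∧
        s = a.sum (fun x n => n • x))
    (l : Fin r) (hl : 0 < v l)
    (m : Fin r → ℕ) (hm : ∀ j, m j = sInf {n : ℕ | 0 ≤ (n : ℤ) * v l + v j}) :
    {s : Fin r → ℕ | IsIrredElt r v s}
      = {x : Fin r → ℕ | ∃ j, x = Pi.single j 1 + m j • Pi.single l 1} := by
  set g : Fin r → (Fin r → ℕ) := fun j => Pi.single j 1 + m j • Pi.single l 1 with hg
  -- basic facts about m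
  have hne : ∀ j, {n : ℕ | 0 ≤ (n : ℤ) * v l + v j}.Nonempty := by
    intro j
    refine ⟨(-(v j)).toNat, ?_⟩
    have h1 : -(v j) ≤ ((-(v j)).toNat : ℤ) := Int.self_le_toNat _
    have h2 : ((-(v j)).toNat : ℤ) ≤ ((-(v j)).toNat : ℤ) * v l :=
      le_mul_of_one_le_right (by positivity) (by omega)
    simp only [Set.mem_setOf_eq]
    linarith
  have hmem : ∀ j, 0 ≤ (m j : ℤ) * v l + v j := by
    intro j
    have := Nat.sInf_mem (hne j)
    rw [← hm j] at this
    exact this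
  have hmin : ∀ (j : Fin r) (n : ℕ), 0 ≤ (n : ℤ) * v l + v j → m j ≤ n := by
    intro j n h
    rw [hm j]
    exact Nat.sInf_le (Set.mem_setOf_eq ▸ h)
  have hval : ∀ j j' : Fin r, g j j'
      = (if j' = j then 1 else 0) + m j * (if j' = l then 1 else 0) := by
    intro j j'
    simp [hg, Pi.single_apply]
  have hinj : Function.Injective g := by
    intro j j' hjj
    by_contra hne'
    by_cases h : j = l
    · have h1 := congrFun hjj j'
      rw [hval, hval] at h1
      have hj'l : j' ≠ l := fun hh => hne' (h.trans hh.symm)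
      simp [hj'l] at h1
      exact hne' h1.symm
    · have h1 := congrFun hjj j
      rw [hval, hval] at h1
      simp [h, fun hh : j = j' => hne' hh] at h1
  have hsub : Set.range g ⊆ {s : Fin r → ℕ | IsIrredElt r v s} := by
    rintro x ⟨j, rfl⟩
    exact gen_irred r v l hl m hmem hmin j
  have hfin : {s : Fin r → ℕ | IsIrredElt r v s}.Finite := by
    by_contra hf
    rw [Set.Infinite.ncard hf] at hcard
    omega
  have hrange : (Set.range g).ncard = r := by
    rw [← Set.image_univ, Set.ncard_image_of_injective _ hinj, Set.ncard_univ]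
    simp
  have hEq : Set.range g = {s : Fin r → ℕ | IsIrredElt r v s} :=
    Set.eq_of_subset_of_ncard_le hsub (by rw [hcard, hrange]) hfin
  rw [← hEq]
  ext x
  simp only [Set.mem_range, Set.mem_setOf_eq, hg]
  exact ⟨fun ⟨j, h⟩ => ⟨j, h.symm⟩, fun ⟨j, h⟩ => ⟨j, h.symm⟩⟩
end

section
/- Let r ≥ 1, v ∈ ℤ^r, l an index with v_l > 0, and m_j := min{m ∈ ℕ : m·v_l + v_j ≥ 0}. Then every element s of S = {k ∈ ℕ^r : ⟨k, v⟩ ≥ 0} with s_l ≥ Σ_{j ≠ l} m_j·s_j can be written as an ℕ-combination of the vectors {e_j + m_j·e_l : 1 ≤ j ≤ r}. -/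
open Finset

theorem stmt16 (r : ℕ) (hr : 1 ≤ r) (v : Fin r → ℤ) (l : Fin r) (hl : 0 < v l)
    (m : Fin r → ℕ) (hm : ∀ j, m j = sInf {n : ℕ | 0 ≤ (n : ℤ) * v l + v j}) :
    ∀ s : Fin r → ℕ, 0 ≤ ∑ i, (s i : ℤ) * v i →
      (∑ j ∈ univ.filter (· ≠ l), m j * s j) ≤ s l →
      ∃ a : Fin r → ℕ,
        s = ∑ j, a j • (Pi.single j 1 + m j • Pi.single l 1 : Fin r → ℕ) := by
  intro s _ hs
  have hml : m l = 0 := by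
    rw [hm l]
    refine Nat.sInf_eq_zero.2 (Or.inl ?_)
    simp [hl.le]
  set T := ∑ j ∈ univ.filter (· ≠ l), m j * s j with hT
  refine ⟨fun j => if j = l then s l - T else s j, ?_⟩
  funext i
  have hsum : (∑ j, (if j = l then s l - T else s j) •
      (Pi.single j 1 + m j • Pi.single l 1 : Fin r → ℕ)) i
      = ∑ j, (if j = l then s l - T else s j) *
        ((Pi.single j 1 : Fin r → ℕ) i + m j * (Pi.single l 1 : Fin r → ℕ) i) := by
    rw [Finset.sum_apply]
    exact Finset.sum_congr rfl fun j _ => by simp [smul_eq_mul]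
  rw [hsum]
  by_cases hi : i = l
  · subst hi
    have key : ∀ j : Fin r, (if j = i then s i - T else s j) *
        ((Pi.single j 1 : Fin r → ℕ) i + m j * (Pi.single i 1 : Fin r → ℕ) i)
        = (if j = i then (s i - T) * (1 + m i) else s j * m j) := by
      intro j
      by_cases hj : j = i <;> simp [hj, Pi.single_apply]
    rw [Finset.sum_congr rfl fun j _ => key j,
      ← Finset.add_sum_erase univ _ (Finset.mem_univ i), if_pos rfl]
    have he : ∑ j ∈ univ.erase i,
        (if j = i then (s i - T) * (1 + m i) else s j * m j) = T := by
      rw [hT, ← Finset.filter_ne']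
      refine Finset.sum_congr rfl fun j hj => ?_
      rw [Finset.mem_filter] at hj
      rw [if_neg hj.2, mul_comm]
    rw [he, hml]
    omega
  · have key : ∀ j : Fin r, (if j = l then s l - T else s j) *
        ((Pi.single j 1 : Fin r → ℕ) i + m j * (Pi.single l 1 : Fin r → ℕ) i)
        = (if j = i then s i else 0) := by
      intro j
      by_cases hj : j = i
      · subst hj; simp [hi, Pi.single_apply, Ne.symm]
      · by_cases hjl : j = l <;> simp [hj, hjl, Pi.single_apply, Ne.symm hi, hi]
    rw [Finset.sum_congr rfl fun j _ => key j, Finset.sum_ite_eq' univ i]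
    simp
end
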